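/- arXiv:math/0407342 — 7 statements merged into one kernel-verified Lean document; each statement's English description precedes it below -/
import Mathlib

section
/- Fix a real number q with 0 < q < 1. Let H = ℓ²(ℕ × ℕ) with orthonormal basis |m,n⟩. Define bounded operators by t|m,n⟩ = q^{2m+4n+4}|m,n⟩, a|m,n⟩ = (1-q^{2m})^{1/2} q^{m+2n} |m-1,n⟩ (with a|0,n⟩ = 0), and b|m,n⟩ = (1-q^{4n+4})^{1/2} q^{2(m+n+2)} |m,n+1⟩. Then these operators satisfy a b = q^4 b a. -/
noncomputable section

/-- The Hilbert space ℓ²(ℕ × ℕ). -/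
abbrev H2 : Type := lp (fun _ : ℕ × ℕ => ℂ) 2

/-- The standard orthonormal basis vector `|m,n⟩` of ℓ²(ℕ × ℕ). -/
def ket (m n : ℕ) : H2 := lp.single 2 (m, n) (1 : ℂ)

lemma dense_span_ket :
    Dense (Submodule.span ℂ (Set.range fun p : ℕ × ℕ => ket p.1 p.2) : Set H2) := by
  intro f
  have hsum : HasSum (fun i : ℕ × ℕ => lp.single 2 i (f i)) f :=
    lp.hasSum_single (by norm_num) f
  refine mem_closure_of_tendsto hsum ?_
  filter_upwards with s
  refine Submodule.sum_mem _ fun i _ => ?_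
  have : lp.single 2 i (f i) = (f i) • ket i.1 i.2 := by
    rw [ket, ← lp.single_smul]
    simp
  rw [this]
  exact Submodule.smul_mem _ _ (Submodule.subset_span ⟨i, rfl⟩)

/-- In the representation σ of `A(S⁴_q)`, the operators satisfy `a b = q⁴ b a`. -/
theorem stmt2 (q : ℝ) (hq0 : 0 < q) (hq1 : q < 1)
    (t a b : H2 →L[ℂ] H2)
    (hT : ∀ m n : ℕ, t (ket m n) = ((q ^ (2 * m + 4 * n + 4) : ℝ) : ℂ) • ket m n)
    (ha0 : ∀ n : ℕ, a (ket 0 n) = 0)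
    (ha : ∀ m n : ℕ, a (ket (m + 1) n)
        = ((Real.sqrt (1 - q ^ (2 * (m + 1))) * q ^ ((m + 1) + 2 * n) : ℝ) : ℂ) • ket m n)
    (hb : ∀ m n : ℕ, b (ket m n)
        = ((Real.sqrt (1 - q ^ (4 * n + 4)) * q ^ (2 * (m + n + 2)) : ℝ) : ℂ) • ket m (n + 1)) :
    a * b = ((q : ℂ) ^ 4) • (b * a) := by
  refine ContinuousLinearMap.ext_on dense_span_ket ?_
  rintro x ⟨⟨m, n⟩, rfl⟩
  simp only [ContinuousLinearMap.mul_apply, ContinuousLinearMap.smul_apply]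
  cases m with
  | zero =>
      rw [hb, map_smul, ha0, ha0, map_zero]
      simp
  | succ m =>
      rw [hb, map_smul, ha, ha, map_smul, hb]
      rw [smul_smul, smul_smul, smul_smul]
      congr 1
      push_cast
      ring_nf
end
end

section
/- Fix 0 < q < 1. On ℓ²(ℕ × ℕ) define operators t, a, b as in the representation σ: t|m,n⟩ = q^{2m+4n+4}|m,n⟩, a|m,n⟩ = (1-q^{2m})^{1/2} q^{m+2n}|m-1,n⟩, b|m,n⟩ = (1-q^{4n+4})^{1/2} q^{2(m+n+2)}|m,n+1⟩. Then the sphere relation a a* + b b* = q^{-2} t (1 - q^{-2} t) holds, where a*, b* are the Hilbert space adjoints. -/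
noncomputable section

/-!
`a` is a weighted backward shift in `m` and `b` a weighted forward shift in `n`. The adjoint of
a weighted shift along an injective map is the shift in the opposite direction with conjugate
weights, so `a a*` and `b b*` are diagonal with the squared weights as entries. On `|m,n⟩` the
relation then reduces to the identity
`(1 - q^(2m+2)) q^(2m+4n+2) + (1 - q^(4n)) q^(4m+4n+4) = q^(2m+4n+2) - q^(4m+8n+4)`.
-/

open ContinuousLinearMap ComplexConjugate Function
open scoped InnerProductSpace

namespace lp

variable {ι : Type*} [DecidableEq ι]

theorem inner_single_one_left (i : ι) (x : ℓ²(ι, ℂ)) :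
    ⟪lp.single 2 i (1 : ℂ), x⟫_ℂ = x i := by
  simp [lp.inner_single_left]

theorem ext_continuousLinearMap_single {E : Type*} [AddCommMonoid E] [Module ℂ E]
    [TopologicalSpace E] [T2Space E] {f g : ℓ²(ι, ℂ) →L[ℂ] E}
    (h : ∀ i, f (lp.single 2 i 1) = g (lp.single 2 i 1)) : f = g :=
  lp.ext_continuousLinearMap ENNReal.ofNat_ne_top fun i => ContinuousLinearMap.ext_ring (h i)

theorem adjoint_apply_apply (f : ℓ²(ι, ℂ) →L[ℂ] ℓ²(ι, ℂ)) (x : ℓ²(ι, ℂ)) (i : ι) :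
    adjoint f x i = ⟪f (lp.single 2 i 1), x⟫_ℂ := by
  rw [← inner_single_one_left, adjoint_inner_right]

def IsWeightedShift (f : ℓ²(ι, ℂ) →L[ℂ] ℓ²(ι, ℂ)) (σ : ι → ι) (c : ι → ℂ) : Prop :=
  ∀ i, f (lp.single 2 i 1) = c i • lp.single 2 (σ i) 1

def IsWeightedBackwardShift (f : ℓ²(ι, ℂ) →L[ℂ] ℓ²(ι, ℂ)) (σ : ι → ι) (c : ι → ℂ) : Prop :=
  (∀ i, f (lp.single 2 (σ i) 1) = c i • lp.single 2 i 1) ∧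
    ∀ j ∉ Set.range σ, f (lp.single 2 j 1) = 0

variable {f g : ℓ²(ι, ℂ) →L[ℂ] ℓ²(ι, ℂ)} {σ : ι → ι} {c d : ι → ℂ}

theorem IsWeightedShift.isWeightedBackwardShift_adjoint (hf : IsWeightedShift f σ c)
    (hσ : Injective σ) : IsWeightedBackwardShift (adjoint f) σ (conj ∘ c) := by
  constructor
  · intro i
    ext k
    rw [adjoint_apply_apply, hf, inner_smul_left, inner_single_one_left]
    by_cases hk : k = i
    · subst hk; simp
    · simp [lp.single_apply, hk, hσ.ne hk]
  · intro j hj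
    ext k
    rw [adjoint_apply_apply, hf, inner_smul_left, inner_single_one_left]
    have hσk : σ k ≠ j := fun h => hj ⟨k, h⟩
    simp [lp.single_apply, hσk]

theorem IsWeightedBackwardShift.isWeightedShift_adjoint (hf : IsWeightedBackwardShift f σ c)
    (hσ : Injective σ) : IsWeightedShift (adjoint f) σ (conj ∘ c) := by
  intro i
  ext k
  rw [adjoint_apply_apply]
  by_cases hk : k ∈ Set.range σ
  · obtain ⟨l, rfl⟩ := hk
    rw [hf.1, inner_smul_left, inner_single_one_left]
    by_cases hl : l = i
    · subst hl; simp
    · simp [lp.single_apply, hl, hσ.ne hl]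
  · have hki : k ≠ σ i := fun h => hk ⟨i, h.symm⟩
    simp [hf.2 k hk, lp.single_apply, hki]

theorem IsWeightedBackwardShift.mul_apply_single (hg : IsWeightedBackwardShift g σ d)
    (hf : IsWeightedShift f σ c) (i : ι) :
    (g * f) (lp.single 2 i 1) = (c i * d i) • lp.single 2 i 1 := by
  rw [mul_apply_eq_comp, hf, map_smul, hg.1, smul_smul]

theorem IsWeightedShift.mul_apply_single_image (hf : IsWeightedShift f σ c)
    (hg : IsWeightedBackwardShift g σ d) (i : ι) :
    (f * g) (lp.single 2 (σ i) 1) = (d i * c i) • lp.single 2 (σ i) 1 := by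
  rw [mul_apply_eq_comp, hg.1, map_smul, hf, smul_smul]

end lp

theorem sq_sqrt_one_sub_pow_mul_pow {q : ℝ} (hq0 : 0 ≤ q) (hq1 : q ≤ 1) (k j : ℕ) :
    (√(1 - q ^ k) * q ^ j) ^ 2 = (1 - q ^ k) * q ^ (2 * j) := by
  rw [mul_pow, Real.sq_sqrt (sub_nonneg.2 (pow_le_one₀ hq0 hq1)), ← pow_mul, mul_comm j]

theorem ext_ket {f g : H2 →L[ℂ] H2} (h : ∀ m n, f (ket m n) = g (ket m n)) : f = g :=
  lp.ext_continuousLinearMap_single fun i => h i.1 i.2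

theorem mul_adjoint_ket_of_lowering {a : H2 →L[ℂ] H2} {α : ℕ → ℕ → ℝ}
    (ha0 : ∀ n, a (ket 0 n) = 0) (ha : ∀ m n, a (ket (m + 1) n) = (α m n : ℂ) • ket m n)
    (m n : ℕ) : (a * adjoint a) (ket m n) = ((α m n ^ 2 : ℝ) : ℂ) • ket m n := by
  have hshift : lp.IsWeightedBackwardShift a (Prod.map (· + 1) id) fun i => α i.1 i.2 := by
    refine ⟨fun i => ha i.1 i.2, ?_⟩
    rintro ⟨_ | m, n⟩ hj
    · exact ha0 n
    · exact absurd ⟨(m, n), rfl⟩ hj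
  have hσ : Injective (Prod.map (· + 1) id : ℕ × ℕ → ℕ × ℕ) :=
    Prod.map_injective.2 ⟨add_left_injective 1, injective_id⟩
  rw [ket, hshift.mul_apply_single (hshift.isWeightedShift_adjoint hσ)]
  simp [sq]

theorem mul_adjoint_ket_zero_of_raising {b : H2 →L[ℂ] H2} {β : ℕ → ℕ → ℝ}
    (hb : ∀ m n, b (ket m n) = (β m n : ℂ) • ket m (n + 1)) (m : ℕ) :
    (b * adjoint b) (ket m 0) = 0 := by
  have hshift : lp.IsWeightedShift b (Prod.map id (· + 1)) fun i => β i.1 i.2 :=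
    fun i => hb i.1 i.2
  have hσ : Injective (Prod.map id (· + 1) : ℕ × ℕ → ℕ × ℕ) :=
    Prod.map_injective.2 ⟨injective_id, add_left_injective 1⟩
  simp [ket, mul_apply_eq_comp, (hshift.isWeightedBackwardShift_adjoint hσ).2 (m, 0) (by simp)]

theorem mul_adjoint_ket_succ_of_raising {b : H2 →L[ℂ] H2} {β : ℕ → ℕ → ℝ}
    (hb : ∀ m n, b (ket m n) = (β m n : ℂ) • ket m (n + 1)) (m n : ℕ) :
    (b * adjoint b) (ket m (n + 1)) = ((β m n ^ 2 : ℝ) : ℂ) • ket m (n + 1) := by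
  have hshift : lp.IsWeightedShift b (Prod.map id (· + 1)) fun i => β i.1 i.2 :=
    fun i => hb i.1 i.2
  have hσ : Injective (Prod.map id (· + 1) : ℕ × ℕ → ℕ × ℕ) :=
    Prod.map_injective.2 ⟨injective_id, add_left_injective 1⟩
  simpa [ket, sq] using
    hshift.mul_apply_single_image (hshift.isWeightedBackwardShift_adjoint hσ) (m, n)

open ContinuousLinearMap in
/-- In the representation σ of `A(S⁴_q)`: the sphere relation
`a a* + b b* = q⁻² t (1 - q⁻² t)` holds. -/
theorem stmt4 (q : ℝ) (hq0 : 0 < q) (hq1 : q < 1)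
    (t a b : H2 →L[ℂ] H2)
    (hT : ∀ m n : ℕ, t (ket m n) = ((q ^ (2 * m + 4 * n + 4) : ℝ) : ℂ) • ket m n)
    (ha0 : ∀ n : ℕ, a (ket 0 n) = 0)
    (ha : ∀ m n : ℕ, a (ket (m + 1) n)
        = ((Real.sqrt (1 - q ^ (2 * (m + 1))) * q ^ ((m + 1) + 2 * n) : ℝ) : ℂ) • ket m n)
    (hb : ∀ m n : ℕ, b (ket m n)
        = ((Real.sqrt (1 - q ^ (4 * n + 4)) * q ^ (2 * (m + n + 2)) : ℝ) : ℂ) • ket m (n + 1)) :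
    a * adjoint a + b * adjoint b
      = ((q : ℂ) ^ (-2 : ℤ)) • (t * (1 - ((q : ℂ) ^ (-2 : ℤ)) • t)) := by
  refine ext_ket fun m n => ?_
  have hbb : (b * adjoint b) (ket m n)
      = (((1 - q ^ (4 * n)) * q ^ (4 * (m + n + 1)) : ℝ) : ℂ) • ket m n := by
    rcases n with _ | n
    · simp [mul_adjoint_ket_zero_of_raising hb]
    · rw [mul_adjoint_ket_succ_of_raising hb, sq_sqrt_one_sub_pow_mul_pow hq0.le hq1.le]
      ring_nf
  rw [add_apply, mul_adjoint_ket_of_lowering ha0 ha, hbb,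
    sq_sqrt_one_sub_pow_mul_pow hq0.le hq1.le]
  simp only [smul_apply, mul_apply_eq_comp, sub_apply, one_apply_eq_self, map_sub, map_smul, hT,
    smul_smul, ← sub_smul, ← add_smul]
  congr 1
  have hq : (q : ℂ) ≠ 0 := by exact_mod_cast hq0.ne'
  push_cast
  field_simp
  ring
end
end

section
/- Let z₁, z₂, z₃, z₄ ∈ ℂ with ∑|zᵢ|² = 1, let v be the 4×2 matrix with rows (z₁,z₂), (-z̄₂,z̄₁), (z₃,z₄), (-z̄₄,z̄₃), and set p = v v*. Then p equals (1/2) times the 4×4 matrix with rows (1+x, 0, α, β), (0, 1+x, -β̄, ᾱ), (ᾱ, -β, 1-x, 0), (β̄, α, 0, 1-x), where x = |z₁|²+|z₂|²-|z₃|²-|z₄|², α = 2(z₁z̄₃ + z₂z̄₄), β = 2(-z₁z₄ + z₂z₃). -/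
/-!
Each pair of rows of `v` is the `2 × 2` complex matrix of a quaternion `q = a + b j`, so `v v*`
is built from the `2 × 2` blocks `qᵢ qⱼ*`: the diagonal ones are `|qᵢ|² • 1`, and the off-diagonal
one is again the matrix of a quaternion, whose entries give `α / 2` and `β / 2`. The constraint
`|q₁|² + |q₂|² = 1` turns `|q₁|²` and `|q₂|²` into `(1 + x) / 2` and `(1 - x) / 2`.
-/

open Matrix

theorem quaternionPair_mul_conjTranspose_self {R : Type*} [CommRing R] [StarRing R]
    (a b c d : R) :
    !![a, b; -star b, star a; c, d; -star d, star c] *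
        (!![a, b; -star b, star a; c, d; -star d, star c] : Matrix (Fin 4) (Fin 2) R)ᴴ =
      !![a * star a + b * star b, 0, a * star c + b * star d, -(a * d) + b * c;
         0, a * star a + b * star b, star a * star d - star b * star c, star a * c + star b * d;
         c * star a + d * star b, a * d - b * c, c * star c + d * star d, 0;
         -(star a * star d) + star b * star c, a * star c + b * star d, 0,
           c * star c + d * star d] := by
  ext i j
  fin_cases i <;> fin_cases j <;>
    simp only [mul_apply, Fin.sum_univ_two, conjTranspose_apply, of_apply, cons_val',
      cons_val_zero, cons_val_one, cons_val_fin_one, cons_val, Fin.zero_eta, Fin.mk_one,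
      Fin.reduceFinMk, Fin.isValue, star_neg, star_star] <;>
    ring

theorem Complex.mul_star_add_mul_star (z w : ℂ) :
    z * star z + w * star w = ((‖z‖ ^ 2 + ‖w‖ ^ 2 : ℝ) : ℂ) := by
  push_cast
  simp only [Complex.star_def, Complex.mul_conj']

/-- Explicit form of the classical charge `-1` instanton projector `p = v v*`. -/
theorem stmt10 (z₁ z₂ z₃ z₄ : ℂ)
    (h : ‖z₁‖ ^ 2 + ‖z₂‖ ^ 2 + ‖z₃‖ ^ 2 + ‖z₄‖ ^ 2 = 1)
    (v : Matrix (Fin 4) (Fin 2) ℂ)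
    (hv : v = !![z₁, z₂; -star z₂, star z₁; z₃, z₄; -star z₄, star z₃])
    (x : ℂ) (hx : x = ((‖z₁‖ ^ 2 + ‖z₂‖ ^ 2 - ‖z₃‖ ^ 2 - ‖z₄‖ ^ 2 : ℝ) : ℂ))
    (α β : ℂ) (hα : α = 2 * (z₁ * star z₃ + z₂ * star z₄))
    (hβ : β = 2 * (-z₁ * z₄ + z₂ * z₃)) :
    v * vᴴ = (1 / 2 : ℂ) •
      !![1 + x, 0, α, β;
         0, 1 + x, -star β, star α;
         star α, -β, 1 - x, 0;
         star β, α, 0, 1 - x] := by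
  have h₁₂ : z₁ * star z₁ + z₂ * star z₂ = (1 + x) / 2 := by
    rw [Complex.mul_star_add_mul_star, hx, ← Complex.ofReal_one, ← h]
    push_cast
    ring
  have h₃₄ : z₃ * star z₃ + z₄ * star z₄ = (1 - x) / 2 := by
    rw [Complex.mul_star_add_mul_star, hx, ← Complex.ofReal_one, ← h]
    push_cast
    ring
  subst hv hα hβ
  rw [quaternionPair_mul_conjTranspose_self, h₁₂, h₃₄]
  ext i j
  fin_cases i <;> fin_cases j <;> simp <;> ring
end

section
/- Let x, α, β be, respectively, a real number and two complex numbers with x² + |α|² + |β|² = 1, and let p be (1/2) times the 4×4 complex matrix with rows (1+x, 0, α, β), (0, 1+x, -β̄, ᾱ), (ᾱ, -β, 1-x, 0), (β̄, α, 0, 1-x). Then p is a self-adjoint idempotent of trace 2 and rank 2. -/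
/-!
Write `p = ½ (1 + Γ)`, where `Γ` is a real combination of five anticommuting Hermitian matrices
with coefficients `x, Re α, Im α, Re β, Im β`. Then `Γ` is Hermitian and traceless with
`Γ² = (x² + |α|² + |β|²) • 1 = 1`, so `p` is a self-adjoint idempotent of trace `2`, and the rank
of an idempotent equals its trace.
-/

open Matrix

theorem Matrix.IsIdempotentElem.rank_eq_trace {K n : Type*} [Field K] [Fintype n] [DecidableEq n]
    {A : Matrix n n K} (hA : IsIdempotentElem A) : (A.rank : K) = A.trace := by
  have h : IsIdempotentElem (Matrix.toLin' A) := hA.map Matrix.toLinAlgEquiv'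
  rw [Matrix.rank, ← Matrix.toLin'_apply', ← Matrix.trace_toLin'_eq,
    (LinearMap.IsIdempotentElem.isProj_range _ h).trace]

theorem isIdempotentElem_half_smul_one_add {K A : Type*} [Field K] [NeZero (2 : K)] [Ring A]
    [Algebra K A] {u : A} (hu : u * u = 1) : IsIdempotentElem ((1 / 2 : K) • (1 + u)) := by
  rw [IsIdempotentElem, smul_mul_smul_comm, add_mul, one_mul, mul_add, mul_one, hu,
    show (1 : A) + u + (u + 1) = (2 : K) • (1 + u) by rw [two_smul]; abel, smul_smul]
  congr 1
  field_simp

def cliffordMatrix (x : ℝ) (α β : ℂ) : Matrix (Fin 4) (Fin 4) ℂ :=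
  !![(x : ℂ), 0, α, β;
     0, (x : ℂ), -star β, star α;
     star α, -β, -(x : ℂ), 0;
     star β, α, 0, -(x : ℂ)]

section cliffordMatrix

variable (x : ℝ) (α β : ℂ)

theorem cliffordMatrix_mul_self :
    cliffordMatrix x α β * cliffordMatrix x α β = ((x ^ 2 + ‖α‖ ^ 2 + ‖β‖ ^ 2 : ℝ) : ℂ) • 1 := by
  ext i j
  fin_cases i <;> fin_cases j <;>
    simp [cliffordMatrix, mul_apply, Fin.sum_univ_four, Complex.mul_conj', Complex.conj_mul'] <;>
    ring

theorem cliffordMatrix_isHermitian : (cliffordMatrix x α β).IsHermitian := by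
  ext i j
  fin_cases i <;> fin_cases j <;> simp [cliffordMatrix]

theorem trace_cliffordMatrix : (cliffordMatrix x α β).trace = 0 := by
  simp [cliffordMatrix, trace, Fin.sum_univ_four]

theorem one_add_cliffordMatrix :
    1 + cliffordMatrix x α β =
      !![1 + (x : ℂ), 0, α, β;
         0, 1 + (x : ℂ), -star β, star α;
         star α, -β, 1 - (x : ℂ), 0;
         star β, α, 0, 1 - (x : ℂ)] := by
  ext i j
  fin_cases i <;> fin_cases j <;> simp [cliffordMatrix, sub_eq_add_neg]

end cliffordMatrix

/-- The matrix `p` built from a point `(x, α, β)` of the 4-sphere is a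
self-adjoint idempotent of trace 2 and rank 2. -/
theorem stmt11 (x : ℝ) (α β : ℂ)
    (h : (x : ℝ) ^ 2 + ‖α‖ ^ 2 + ‖β‖ ^ 2 = 1)
    (p : Matrix (Fin 4) (Fin 4) ℂ)
    (hp : p = (1 / 2 : ℂ) •
      !![1 + (x : ℂ), 0, α, β;
         0, 1 + (x : ℂ), -star β, star α;
         star α, -β, 1 - (x : ℂ), 0;
         star β, α, 0, 1 - (x : ℂ)]) :
    pᴴ = p ∧ p * p = p ∧ p.trace = 2 ∧ p.rank = 2 := by
  rw [← one_add_cliffordMatrix] at hp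
  subst hp
  have hsq : cliffordMatrix x α β * cliffordMatrix x α β = 1 := by
    rw [cliffordMatrix_mul_self, h, Complex.ofReal_one, one_smul]
  have hidem := isIdempotentElem_half_smul_one_add (K := ℂ) hsq
  have htrace : ((1 / 2 : ℂ) • (1 + cliffordMatrix x α β)).trace = 2 := by
    rw [trace_smul, trace_add, trace_one, trace_cliffordMatrix]
    norm_num
  refine ⟨?_, hidem, htrace, ?_⟩
  · simp [conjTranspose_smul, (cliffordMatrix_isHermitian x α β).eq]
  · exact_mod_cast hidem.rank_eq_trace.trans htrace
end

section
/- Fix 0 < q < 1. On ℓ²(ℕ × ℕ) define b|m,n⟩ = (1-q^{4n+4})^{1/2} q^{2(m+n+2)}|m,n+1⟩ and t|m,n⟩ = q^{2m+4n+4}|m,n⟩. Then b b* - q^{-4} b* b = (1-q^{-4}) t², where b* is the adjoint of b. -/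
noncomputable section

/-!
`b` is the weighted shift `|m,n⟩ ↦ w(m,n) |m,n+1⟩`, so `b* b` and `b b*` are diagonal in the
basis `|m,n⟩`, with eigenvalues `w(m,n)²` and `w(m,n-1)²` (and `0` when `n = 0`). On each basis
vector the relation is therefore an identity between real numbers, which after `√x · √x = x`
(valid as `0 < q < 1`) is a polynomial identity in `q` and `q⁻¹`.
-/

theorem lp.ext_continuousLinearMap_single_s14 {ι 𝕜 F : Type*} [RCLike 𝕜] [DecidableEq ι]
    [AddCommMonoid F] [Module 𝕜 F] [TopologicalSpace F] [T2Space F]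
    {f g : lp (fun _ : ι => 𝕜) 2 →L[𝕜] F}
    (h : ∀ i, f (lp.single 2 i 1) = g (lp.single 2 i 1)) : f = g :=
  lp.ext_continuousLinearMap (by norm_num) fun i => ContinuousLinearMap.ext_ring (h i)

section WeightedShift

variable {ι 𝕜 : Type*} [RCLike 𝕜] [DecidableEq ι]

def IsWeightedShift (A : lp (fun _ : ι => 𝕜) 2 →L[𝕜] lp (fun _ : ι => 𝕜) 2) (σ : ι → ι)
    (w : ι → 𝕜) : Prop :=
  ∀ i, A (lp.single 2 i 1) = w i • lp.single 2 (σ i) 1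

namespace IsWeightedShift

open ContinuousLinearMap

variable {A : lp (fun _ : ι => 𝕜) 2 →L[𝕜] lp (fun _ : ι => 𝕜) 2} {σ : ι → ι} {w : ι → 𝕜}

theorem adjoint_apply_apply (hA : IsWeightedShift A σ w) (x : lp (fun _ : ι => 𝕜) 2) (i : ι) :
    adjoint A x i = star (w i) * x (σ i) := by
  have h := adjoint_inner_right A (lp.single 2 i 1) x
  rw [hA, inner_smul_left, lp.inner_single_left, lp.inner_single_left] at h
  simpa using h

theorem adjoint_apply_single_image (hA : IsWeightedShift A σ w) (hσ : Function.Injective σ)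
    (i : ι) : adjoint A (lp.single 2 (σ i) 1) = star (w i) • lp.single 2 i 1 := by
  ext j
  rw [hA.adjoint_apply_apply, lp.coeFn_smul, Pi.smul_apply, lp.single_apply, lp.single_apply]
  by_cases hj : j = i
  · simp [hj]
  · simp [hj, hσ.ne hj]

theorem adjoint_apply_single_of_notMem_range (hA : IsWeightedShift A σ w) {j : ι}
    (hj : j ∉ Set.range σ) : adjoint A (lp.single 2 j 1) = 0 := by
  ext i
  rw [hA.adjoint_apply_apply, lp.single_apply, Pi.single_eq_of_ne (fun h => hj ⟨i, h⟩)]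
  simp

theorem adjoint_mul_self_apply_single (hA : IsWeightedShift A σ w) (hσ : Function.Injective σ)
    (i : ι) : (adjoint A * A) (lp.single 2 i 1) = (star (w i) * w i) • lp.single 2 i 1 := by
  rw [mul_apply_eq_comp, hA, map_smul, hA.adjoint_apply_single_image hσ, smul_smul, mul_comm]

theorem mul_adjoint_apply_single_image (hA : IsWeightedShift A σ w) (hσ : Function.Injective σ)
    (i : ι) :
    (A * adjoint A) (lp.single 2 (σ i) 1) = (star (w i) * w i) • lp.single 2 (σ i) 1 := by
  rw [mul_apply_eq_comp, hA.adjoint_apply_single_image hσ, map_smul, hA, smul_smul]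

theorem mul_adjoint_apply_single_of_notMem_range (hA : IsWeightedShift A σ w) {j : ι}
    (hj : j ∉ Set.range σ) : (A * adjoint A) (lp.single 2 j 1) = 0 := by
  rw [mul_apply_eq_comp, hA.adjoint_apply_single_of_notMem_range hj, map_zero]

end IsWeightedShift

end WeightedShift

open ContinuousLinearMap in
/-- In the representation σ: `b b* - q⁻⁴ b* b = (1-q⁻⁴) t²`. -/
theorem stmt14 (q : ℝ) (hq0 : 0 < q) (hq1 : q < 1)
    (t b : H2 →L[ℂ] H2)
    (hT : ∀ m n : ℕ, t (ket m n) = ((q ^ (2 * m + 4 * n + 4) : ℝ) : ℂ) • ket m n)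
    (hb : ∀ m n : ℕ, b (ket m n)
        = ((Real.sqrt (1 - q ^ (4 * n + 4)) * q ^ (2 * (m + n + 2)) : ℝ) : ℂ) • ket m (n + 1)) :
    b * adjoint b - ((q : ℂ) ^ (-4 : ℤ)) • (adjoint b * b)
      = (1 - (q : ℂ) ^ (-4 : ℤ)) • t ^ 2 := by
  set w : ℕ × ℕ → ℝ := fun i => Real.sqrt (1 - q ^ (4 * i.2 + 4)) * q ^ (2 * (i.1 + i.2 + 2))
  have hb_shift : IsWeightedShift b (fun i => (i.1, i.2 + 1)) (fun i => (w i : ℂ)) :=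
    fun i => hb i.1 i.2
  have hσ : Function.Injective fun i : ℕ × ℕ => (i.1, i.2 + 1) := fun i j h => by
    simp only [Prod.mk.injEq, add_left_inj] at h
    exact Prod.ext h.1 h.2
  have hw_sq (i : ℕ × ℕ) :
      star (w i : ℂ) * w i = ((1 - q ^ (4 * i.2 + 4)) * q ^ (4 * (i.1 + i.2 + 2)) : ℝ) := by
    rw [Complex.star_def, Complex.conj_ofReal, ← Complex.ofReal_mul, mul_mul_mul_comm,
      Real.mul_self_sqrt (sub_nonneg.2 (pow_le_one₀ hq0.le hq1.le)), ← pow_add]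
    ring_nf
  have ht (i : ℕ × ℕ) :
      t (lp.single 2 i 1) = ((q ^ (2 * i.1 + 4 * i.2 + 4) : ℝ) : ℂ) • lp.single 2 i 1 :=
    hT i.1 i.2
  have ht_sq (i : ℕ × ℕ) :
      (t ^ 2) (lp.single 2 i 1) = ((q ^ (4 * i.1 + 8 * i.2 + 8) : ℝ) : ℂ) • lp.single 2 i 1 := by
    rw [pow_two, mul_apply_eq_comp, ht, map_smul, ht, smul_smul]
    push_cast
    ring_nf
  have hq : (q : ℂ) ≠ 0 := mod_cast hq0.ne'
  refine lp.ext_continuousLinearMap_single_s14 fun ⟨m, n⟩ => ?_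
  rw [sub_apply, smul_apply, smul_apply, hb_shift.adjoint_mul_self_apply_single hσ, ht_sq]
  rcases n with _ | k
  · rw [hb_shift.mul_adjoint_apply_single_of_notMem_range (by simp), zero_sub, smul_smul,
      smul_smul, ← neg_smul, hw_sq]
    congr 1
    push_cast
    field_simp
    ring
  · rw [hb_shift.mul_adjoint_apply_single_image hσ (m, k), smul_smul, smul_smul, ← sub_smul,
      hw_sq, hw_sq]
    congr 1
    push_cast
    field_simp
    ring
end
end

section
/- Fix 0 < q < 1. On ℓ²(ℕ × ℕ) define a|m,n⟩ = (1-q^{2m})^{1/2} q^{m+2n}|m-1,n⟩, b|m,n⟩ = (1-q^{4n+4})^{1/2} q^{2(m+n+2)}|m,n+1⟩, t|m,n⟩ = q^{2m+4n+4}|m,n⟩. Then q⁴ a* a + q^{-4} b* b = t(1 - t). -/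
noncomputable section

/-! All operators involved are weighted shifts in the basis `|m,n⟩`: `a` lowers `m`, `b` raises
`n` and `t` is diagonal. Hence `a* a` and `b* b` are diagonal with the squared weights as entries,
`a* a|m,n⟩ = (1 - q^{2m}) q^{2m+4n}|m,n⟩` and `b* b|m,n⟩ = (1 - q^{4n+4}) q^{4(m+n+2)}|m,n⟩`,
and the operator identity reduces to an identity between these eigenvalues and those of
`t(1 - t)`. -/

namespace HilbertBasis

variable {ι 𝕜 E : Type*} [RCLike 𝕜] [NormedAddCommGroup E] [InnerProductSpace 𝕜 E]

theorem ext_continuousLinearMap {F : Type*} [TopologicalSpace F] [AddCommGroup F] [Module 𝕜 F]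
    [T2Space F] (b : HilbertBasis ι 𝕜 E) {T S : E →L[𝕜] F} (h : ∀ i, T (b i) = S (b i)) :
    T = S :=
  ContinuousLinearMap.ext_on
    (Submodule.dense_iff_topologicalClosure_eq_top.2 b.dense_span) (Set.forall_mem_range.2 h)

theorem adjoint_apply_eq_smul [CompleteSpace E] (b : HilbertBasis ι 𝕜 E) {A : E →L[𝕜] E}
    {i j : ι} {c : 𝕜} (hj : A (b j) = c • b i) (hk : ∀ k, k ≠ j → inner 𝕜 (b i) (A (b k)) = 0) :
    ContinuousLinearMap.adjoint A (b i) = starRingEnd 𝕜 c • b j := by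
  refine b.repr.injective (lp.ext (funext fun k => ?_))
  simp only [map_smul, lp.coeFn_smul, Pi.smul_apply, b.repr_apply_apply,
    ContinuousLinearMap.adjoint_inner_right, ← inner_conj_symm (A (b k))]
  rcases eq_or_ne k j with rfl | hkj
  · simp [hj, inner_smul_right, b.orthonormal.1]
  · simp [hk k hkj, b.orthonormal.inner_eq_zero hkj]

end HilbertBasis

def ketBasis : HilbertBasis (ℕ × ℕ) ℂ H2 := HilbertBasis.ofRepr (LinearIsometryEquiv.refl ℂ H2)

theorem ketBasis_apply (m n : ℕ) : ketBasis (m, n) = ket m n := by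
  rw [← ketBasis.repr_symm_single]
  rfl

open ContinuousLinearMap

theorem adjoint_apply_ket_of_lowers_fst {a : H2 →L[ℂ] H2} {α : ℕ → ℕ → ℂ}
    (ha0 : ∀ n, a (ket 0 n) = 0) (ha : ∀ m n, a (ket (m + 1) n) = α m n • ket m n) (m n : ℕ) :
    adjoint a (ket m n) = starRingEnd ℂ (α m n) • ket (m + 1) n := by
  simp only [← ketBasis_apply] at ha0 ha ⊢
  refine ketBasis.adjoint_apply_eq_smul (ha m n) ?_
  rintro ⟨_ | k, l⟩ hkl
  · simp [ha0]
  · have : (k, l) ≠ (m, n) := by grind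
    simp [ha, inner_smul_right, ketBasis.orthonormal.inner_eq_zero this.symm]

theorem adjoint_apply_ket_succ_of_raises_snd {b : H2 →L[ℂ] H2} {β : ℕ → ℕ → ℂ}
    (hb : ∀ m n, b (ket m n) = β m n • ket m (n + 1)) (m n : ℕ) :
    adjoint b (ket m (n + 1)) = starRingEnd ℂ (β m n) • ket m n := by
  simp only [← ketBasis_apply] at hb ⊢
  refine ketBasis.adjoint_apply_eq_smul (hb m n) ?_
  rintro ⟨k, l⟩ hkl
  have : (k, l + 1) ≠ (m, n + 1) := by grind
  simp [hb, inner_smul_right, ketBasis.orthonormal.inner_eq_zero this.symm]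

theorem pow_four_mul_sq_add_zpow_neg_four_mul_sq {q : ℝ} (hq0 : 0 < q) (hq1 : q ≤ 1) (m n : ℕ) :
    q ^ 4 * (√(1 - q ^ (2 * m)) * q ^ (m + 2 * n)) ^ 2
      + q ^ (-4 : ℤ) * (√(1 - q ^ (4 * n + 4)) * q ^ (2 * (m + n + 2))) ^ 2
      = q ^ (2 * m + 4 * n + 4) * (1 - q ^ (2 * m + 4 * n + 4)) := by
  have hpow (k : ℕ) : 0 ≤ 1 - q ^ k := sub_nonneg.2 (pow_le_one₀ hq0.le hq1)
  rw [mul_pow, mul_pow, Real.sq_sqrt (hpow _), Real.sq_sqrt (hpow _), zpow_neg]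
  field_simp
  ring

open ContinuousLinearMap in
/-- In the representation σ: `q⁴ a* a + q⁻⁴ b* b = t(1-t)`. -/
theorem stmt15 (q : ℝ) (hq0 : 0 < q) (hq1 : q < 1)
    (t a b : H2 →L[ℂ] H2)
    (hT : ∀ m n : ℕ, t (ket m n) = ((q ^ (2 * m + 4 * n + 4) : ℝ) : ℂ) • ket m n)
    (ha0 : ∀ n : ℕ, a (ket 0 n) = 0)
    (ha : ∀ m n : ℕ, a (ket (m + 1) n)
        = ((Real.sqrt (1 - q ^ (2 * (m + 1))) * q ^ ((m + 1) + 2 * n) : ℝ) : ℂ) • ket m n)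
    (hb : ∀ m n : ℕ, b (ket m n)
        = ((Real.sqrt (1 - q ^ (4 * n + 4)) * q ^ (2 * (m + n + 2)) : ℝ) : ℂ) • ket m (n + 1)) :
    ((q : ℂ) ^ 4) • (adjoint a * a) + ((q : ℂ) ^ (-4 : ℤ)) • (adjoint b * b)
      = t * (1 - t) := by
  refine ketBasis.ext_continuousLinearMap fun ⟨m, n⟩ => ?_
  rw [ketBasis_apply]
  -- at `m = 0` the weight `√(1 - q ^ 0)` vanishes, in accordance with `ha0`
  have haa : (adjoint a * a) (ket m n)
      = (((√(1 - q ^ (2 * m)) * q ^ (m + 2 * n)) ^ 2 : ℝ) : ℂ) • ket m n := by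
    cases m with
    | zero => simp [ha0]
    | succ m =>
      rw [mul_apply_eq_comp, ha, map_smul, adjoint_apply_ket_of_lowers_fst ha0 ha,
        Complex.conj_ofReal, smul_smul, ← Complex.ofReal_mul, ← sq]
  have hbb : (adjoint b * b) (ket m n)
      = (((√(1 - q ^ (4 * n + 4)) * q ^ (2 * (m + n + 2))) ^ 2 : ℝ) : ℂ) • ket m n := by
    rw [mul_apply_eq_comp, hb, map_smul, adjoint_apply_ket_succ_of_raises_snd hb,
      Complex.conj_ofReal, smul_smul, ← Complex.ofReal_mul, ← sq]
  have htt : (t * (1 - t)) (ket m n)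
      = ((q ^ (2 * m + 4 * n + 4) * (1 - q ^ (2 * m + 4 * n + 4)) : ℝ) : ℂ) • ket m n := by
    rw [mul_apply_eq_comp, sub_apply, one_apply_eq_self, map_sub, hT, map_smul, hT, smul_smul,
      ← sub_smul]
    congr 1
    push_cast
    ring
  rw [add_apply, smul_apply, smul_apply, haa, hbb, htt, smul_smul, smul_smul, ← add_smul,
    ← pow_four_mul_sq_add_zpow_neg_four_mul_sq hq0 hq1.le m n]
  norm_cast
end
end

section
/- Let q ≠ 0 be real and let p be the 4×4 matrix over the quantum 4-sphere algebra A(S^4_q) with rows (q^{-2}t, 0, a, b), (0, t, q^{-2}b*, -q²a*), (a*, q^{-2}b, 1-q^{-4}t, 0), (b*, -q²a, 0, 1-q²t). Then p is self-adjoint (p* = p) and p² = p, where the matrix product uses the algebra relations ab = q⁴ba, a*b = ba*, ta = q^{-2}at, tb = q⁴bt, aa* + bb* = q^{-2}t(1-q^{-2}t), q⁴a*a + q^{-4}b*b = t(1-t), bb* - q^{-4}b*b = (1-q^{-4})t². -/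
open Matrix

set_option maxHeartbeats 1600000 in
/-- The defining matrix of the quantum instanton bundle is a self-adjoint
idempotent: `p* = p` and `p² = p` in `M₄(A(S⁴_q))`. -/
theorem stmt19 (q : ℝ) (hq : q ≠ 0) (A : Type*) [Ring A] [Algebra ℂ A] [StarRing A]
    [StarModule ℂ A] (t a b : A) (ht : star t = t)
    (h1 : a * b = ((q : ℂ) ^ 4) • (b * a))
    (h2 : star a * b = b * star a)
    (h3 : t * a = ((q : ℂ) ^ (-2 : ℤ)) • (a * t))
    (h4 : t * b = ((q : ℂ) ^ 4) • (b * t))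
    (h5 : a * star a + b * star b
        = ((q : ℂ) ^ (-2 : ℤ)) • (t * (1 - ((q : ℂ) ^ (-2 : ℤ)) • t)))
    (h6 : ((q : ℂ) ^ 4) • (star a * a) + ((q : ℂ) ^ (-4 : ℤ)) • (star b * b)
        = t * (1 - t))
    (h7 : b * star b - ((q : ℂ) ^ (-4 : ℤ)) • (star b * b)
        = (1 - (q : ℂ) ^ (-4 : ℤ)) • t ^ 2)
    (p : Matrix (Fin 4) (Fin 4) A)
    (hp : p = !![((q : ℂ) ^ (-2 : ℤ)) • t, 0, a, b;
                 0, t, ((q : ℂ) ^ (-2 : ℤ)) • star b, -((q : ℂ) ^ 2) • star a;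
                 star a, ((q : ℂ) ^ (-2 : ℤ)) • b, 1 - ((q : ℂ) ^ (-4 : ℤ)) • t, 0;
                 star b, -((q : ℂ) ^ 2) • a, 0, 1 - ((q : ℂ) ^ 2) • t]) :
    pᴴ = p ∧ p * p = p := by
  have hq' : (q : ℂ) ≠ 0 := by exact_mod_cast hq
  have key : ∀ m n : ℤ, ((q : ℂ) ^ m) * ((q : ℂ) ^ n) = (q : ℂ) ^ (m + n) :=
    fun m n => (zpow_add₀ hq' m n).symm
  have e1 : ((q : ℂ) ^ 2) * ((q : ℂ) ^ (-2 : ℤ)) = 1 := by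
    rw [← zpow_natCast (q:ℂ) 2, key]; norm_num
  have e2 : ((q : ℂ) ^ (-4 : ℤ)) * ((q : ℂ) ^ 4) = 1 := by
    rw [← zpow_natCast (q:ℂ) 4, key]; norm_num
  have hs1 : star b * star a = ((q : ℂ) ^ 4) • (star a * star b) := by
    have := congrArg star h1
    simpa [star_smul, Complex.star_def, map_pow, Complex.conj_ofReal] using this
  have hs2 : star b * a = a * star b := by
    have := congrArg star h2
    simpa using this
  have hs3 : t * star a = ((q : ℂ) ^ 2) • (star a * t) := by
    have h := congrArg star h3
    simp only [StarMul.star_mul, star_smul, Complex.star_def, map_zpow₀, Complex.conj_ofReal,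
      ht] at h
    rw [h, smul_smul, e1, one_smul]
  have hs4 : t * star b = ((q : ℂ) ^ (-4 : ℤ)) • (star b * t) := by
    have h := congrArg star h4
    simp only [StarMul.star_mul, star_smul, Complex.star_def, map_pow, Complex.conj_ofReal,
      ht] at h
    rw [h, smul_smul, e2, one_smul]
  have h5' : a * star a + b * star b
      = ((q : ℂ) ^ (-2 : ℤ)) • t - (((q : ℂ) ^ (-2 : ℤ)) * ((q : ℂ) ^ (-2 : ℤ))) • (t * t) := by
    rw [h5, mul_sub, mul_one, mul_smul_comm, smul_sub, smul_smul]
  have h6' : ((q : ℂ) ^ 4) • (star a * a) + ((q : ℂ) ^ (-4 : ℤ)) • (star b * b)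
      = t - t * t := by rw [h6, mul_sub, mul_one]
  have h7' : b * star b - ((q : ℂ) ^ (-4 : ℤ)) • (star b * b)
      = (1 - (q : ℂ) ^ (-4 : ℤ)) • (t * t) := by rw [h7, pow_two]
  have hA : a * star a = ((q : ℂ) ^ (-2 : ℤ)) • t - ((q : ℂ) ^ (-4 : ℤ)) • (t * t)
      - b * star b := by
    linear_combination (norm := match_scalars <;> (first | ring1 |
      (simp only [_root_.zpow_neg, _root_.zpow_ofNat] <;> field_simp <;> try ring1))) h5'
  have hD : star b * b = ((q : ℂ) ^ 4) • (b * star b)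
      - (((q : ℂ) ^ 4) - 1) • (t * t) := by
    linear_combination (norm := match_scalars <;> (first | ring1 |
      (simp only [_root_.zpow_neg, _root_.zpow_ofNat] <;> field_simp <;> try ring1)))
      (-(q:ℂ)^4) • h7'
  have hC : star a * a = ((q : ℂ) ^ (-4 : ℤ)) • t - ((q : ℂ) ^ (-8 : ℤ)) • (t * t)
      - ((q : ℂ) ^ (-4 : ℤ)) • (b * star b) := by
    linear_combination (norm := match_scalars <;> (first | ring1 |
      (simp only [_root_.zpow_neg, _root_.zpow_ofNat] <;> field_simp <;> try ring1)))
      ((q:ℂ)^(-4:ℤ)) • h6' + ((q:ℂ)^(-4:ℤ)) • h7'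
  subst hp
  constructor
  · ext i j
    fin_cases i <;> fin_cases j <;>
      simp [conjTranspose_apply, ht, star_smul, Complex.star_def, map_zpow₀, map_pow,
        Complex.conj_ofReal]
  · ext i j
    fin_cases i <;> fin_cases j <;>
      · simp only [Fin.zero_eta, Fin.mk_one, Fin.reduceFinMk, Matrix.mul_apply, Fin.sum_univ_four, Matrix.cons_val', Matrix.cons_val_zero,
          Matrix.cons_val_one, Matrix.head_cons, Matrix.head_fin_const, Matrix.empty_val',
          Matrix.cons_val_fin_one, Matrix.cons_val_two, Matrix.cons_val_three,
          Matrix.tail_cons, Matrix.of_apply, Fin.isValue]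
        simp only [h1, h2, hs1, hs2, h3, h4, hs3, hs4, hA, hC, hD, smul_mul_assoc, mul_smul_comm, smul_smul, sub_mul, mul_sub, mul_one, one_mul,
          mul_zero, zero_mul, add_zero, zero_add, neg_smul, smul_neg, neg_mul, mul_neg, neg_neg,
          smul_sub, smul_add, sub_zero, zero_sub]
        match_scalars <;> (first | ring1 |
          (simp only [_root_.zpow_neg, _root_.zpow_ofNat] <;> field_simp <;> try ring1))
end
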